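/- For every word w over {L,R}, every letter W ∈ {L,R}, and every convex function ψ : ℤ → ℝ (i.e. d ↦ ψ(d+1) − ψ(d) is nondecreasing), Σ_{d∈ℤ} ψ(d)·P_w(d) ≤ Σ_{d∈ℤ} ψ(d)·P_{wW}(d), where wW denotes the word w with the letter W appended; the sums are finite since each P_w is finitely supported. -/

import Mathlib

/-- The probability mass functions `P t` on ℤ, defined by
`P 1 = δ₀`, `P (2t) = P t`, `P (2t+1) d = ½ P (t+1) (d+1) + ½ P t (d-1)`. -/
noncomputable def P : ℕ → ℤ → ℝ
  | 0, _ => 0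
  | 1, d => if d = 0 then 1 else 0
  | (n+2), d =>
      if h : (n + 2) % 2 = 0 then P ((n+2)/2) d
      else (1/2) * P ((n+2)/2 + 1) (d+1) + (1/2) * P ((n+2)/2) (d-1)
  decreasing_by all_goals omega

/-- Letters of the alphabet. -/
inductive LR | L | R
deriving DecidableEq

/-- One step of the identification of words with odd integers: `L : t ↦ 2t-1`, `R : t ↦ 2t+1`. -/
def LRstep (t : ℕ) : LR → ℕ
  | LR.L => 2 * t - 1
  | LR.R => 2 * t + 1

/-- The odd integer associated to a word over `{L,R}`, starting from 3. -/
def hword (w : List LR) : ℕ := w.foldl LRstep 3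

/-! Write `E_t ψ = ∑ ψ · P_t`. The recursion gives `E_{2t} = E_t` and
`E_{2t+1} ψ = ½ E_{t+1} ψ(· - 1) + ½ E_t ψ(· + 1)`, while convexity of `ψ` gives Jensen's inequality
`E_t ψ ≤ ½ E_t ψ(· - 1) + ½ E_t ψ(· + 1)`. Combining the two, a strong induction on `t` shows that
both `P_t` and `P_{t+1}` lie below `P_{2t+1}` in the convex order. Appending `R` to a word sends
`h = 2s + 1` to `2h + 1`, whose parent is `h`; appending `L` sends it to `4s + 1 = 2(2s) + 1`,
whose parent `2s + 1` is again `h`. -/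

lemma P_double (t : ℕ) (ht : t ≠ 0) (d : ℤ) : P (2 * t) d = P t d := by
  obtain ⟨k, rfl⟩ := Nat.exists_eq_succ_of_ne_zero ht
  rw [show 2 * (k + 1) = 2 * k + 2 by ring, P]
  simp [Nat.add_comm]

lemma P_double_add_one (t : ℕ) (ht : t ≠ 0) (d : ℤ) :
    P (2 * t + 1) d = 1 / 2 * P (t + 1) (d + 1) + 1 / 2 * P t (d - 1) := by
  obtain ⟨k, rfl⟩ := Nat.exists_eq_succ_of_ne_zero ht
  rw [show 2 * (k + 1) + 1 = (2 * k + 1) + 2 by ring, P]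
  simp [show (2 * k + 1 + 2) % 2 = 1 by omega, show (2 * k + 1 + 2) / 2 = k + 1 by omega]

lemma P_nonneg (t : ℕ) (d : ℤ) : 0 ≤ P t d := by
  induction t, d using P.induct with
  | case1 d => simp [P]
  | case2 => rw [P]; positivity
  | case3 d hd => rw [P]; positivity
  | case4 n d h ih => rw [P]; simpa [h] using ih
  | case5 n d h ih1 ih2 => rw [P]; simp only [h, dite_false]; positivity

lemma abs_lt_of_P_ne_zero (t : ℕ) (d : ℤ) : P t d ≠ 0 → |d| < t := by
  induction t, d using P.induct with
  | case1 d => simp [P]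
  | case2 => simp
  | case3 d hd => simp [P, hd]
  | case4 n d h ih =>
    rw [P]
    simp only [h, dite_true]
    exact fun hP => (ih hP).trans_le (by omega)
  | case5 n d h ih1 ih2 =>
    rw [P]
    simp only [h, dite_false]
    intro hP
    by_cases h1 : P ((n + 2) / 2 + 1) (d + 1) = 0
    · have := ih2 fun h2 => hP (by rw [h1, h2]; ring)
      rw [abs_lt] at this ⊢
      omega
    · have := ih1 h1
      rw [abs_lt] at this ⊢
      omega

lemma summable_mul_P (t : ℕ) (ψ : ℤ → ℝ) : Summable fun d : ℤ => ψ d * P t d := by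
  refine summable_of_hasFiniteSupport ((Set.finite_Ioo (-(t : ℤ)) t).subset fun d hd => ?_)
  exact abs_lt.mp (abs_lt_of_P_ne_zero t d (right_ne_zero_of_mul hd))

lemma tsum_add_comp_add {G α : Type*} [AddGroup G] [AddCommMonoid α] [TopologicalSpace α]
    [ContinuousAdd α] [T2Space α] {f g : G → α} (hf : Summable f) (hg : Summable g) (a b : G) :
    ∑' d, (f (d + a) + g (d + b)) = ∑' d, f d + ∑' d, g d := by
  have hfa : Summable fun d => f (d + a) := (Equiv.addRight a).summable_iff.mpr hf
  have hgb : Summable fun d => g (d + b) := (Equiv.addRight b).summable_iff.mpr hg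
  rw [hfa.tsum_add hgb]
  exact congrArg₂ (· + ·) ((Equiv.addRight a).tsum_eq f) ((Equiv.addRight b).tsum_eq g)

noncomputable def expectP (t : ℕ) (ψ : ℤ → ℝ) : ℝ := ∑' d : ℤ, ψ d * P t d

lemma expectP_double (t : ℕ) (ht : t ≠ 0) (ψ : ℤ → ℝ) : expectP (2 * t) ψ = expectP t ψ :=
  tsum_congr fun d => by rw [P_double t ht d]

lemma expectP_double_add_one (t : ℕ) (ht : t ≠ 0) (ψ : ℤ → ℝ) :
    expectP (2 * t + 1) ψ =
      1 / 2 * expectP (t + 1) (fun d => ψ (d - 1)) + 1 / 2 * expectP t (fun d => ψ (d + 1)) := by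
  have h := tsum_add_comp_add ((summable_mul_P (t + 1) fun d => ψ (d - 1)).mul_left (1 / 2))
    ((summable_mul_P t fun d => ψ (d + 1)).mul_left (1 / 2)) 1 (-1)
  simp only [add_sub_cancel_right, ← sub_eq_add_neg, sub_add_cancel, tsum_mul_left] at h
  rw [expectP, expectP, expectP, ← h]
  exact tsum_congr fun d => by rw [P_double_add_one t ht d]; ring

def IntConvex (ψ : ℤ → ℝ) : Prop := Monotone fun d : ℤ => ψ (d + 1) - ψ d

lemma IntConvex.comp_add_const {ψ : ℤ → ℝ} (hψ : IntConvex ψ) (c : ℤ) :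
    IntConvex fun d => ψ (d + c) := fun a b hab => by
  simpa only [add_right_comm] using hψ (by omega : a + c ≤ b + c)

lemma IntConvex.comp_sub_const {ψ : ℤ → ℝ} (hψ : IntConvex ψ) (c : ℤ) :
    IntConvex fun d => ψ (d - c) := by
  simpa only [← sub_eq_add_neg] using hψ.comp_add_const (-c)

lemma IntConvex.le_midpoint {ψ : ℤ → ℝ} (hψ : IntConvex ψ) (d : ℤ) :
    ψ d ≤ 1 / 2 * ψ (d - 1) + 1 / 2 * ψ (d + 1) := by
  have := hψ (sub_le_self d zero_le_one)
  simp only [sub_add_cancel] at this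
  linarith

/-- Jensen's inequality for the kernel `δ₋₁/2 + δ₁/2`. -/
lemma IntConvex.expectP_le (t : ℕ) {ψ : ℤ → ℝ} (hψ : IntConvex ψ) :
    expectP t ψ ≤ 1 / 2 * expectP t (fun d => ψ (d - 1)) + 1 / 2 * expectP t (fun d => ψ (d + 1)) := by
  have h := tsum_add_comp_add ((summable_mul_P t fun d => ψ (d - 1)).mul_left (1 / 2))
    ((summable_mul_P t fun d => ψ (d + 1)).mul_left (1 / 2)) 0 0
  simp only [add_zero, tsum_mul_left] at h
  rw [expectP, expectP, expectP, ← h]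
  refine (summable_mul_P t ψ).tsum_le_tsum (fun d => ?_) ?_
  · nlinarith [hψ.le_midpoint d, P_nonneg t d]
  · exact ((summable_mul_P t _).mul_left _).add ((summable_mul_P t _).mul_left _)

def ConvexLE (s t : ℕ) : Prop := ∀ ψ : ℤ → ℝ, IntConvex ψ → expectP s ψ ≤ expectP t ψ

/-- `t` and `t + 1` are the two parents of `2t + 1` in the recursion defining `P`. -/
def ParentsConvexLE (t : ℕ) : Prop := ConvexLE t (2 * t + 1) ∧ ConvexLE (t + 1) (2 * t + 1)

lemma parentsConvexLE_one : ParentsConvexLE 1 := by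
  have h3 : ∀ ψ, expectP 3 ψ =
      1 / 2 * expectP 1 (fun d => ψ (d - 1)) + 1 / 2 * expectP 1 (fun d => ψ (d + 1)) :=
    fun ψ => by rw [expectP_double_add_one 1 one_ne_zero, expectP_double 1 one_ne_zero]
  refine ⟨fun ψ hψ => ?_, fun ψ hψ => ?_⟩
  · rw [h3]; exact hψ.expectP_le 1
  · rw [h3, expectP_double 1 one_ne_zero]; exact hψ.expectP_le 1

lemma ParentsConvexLE.double {s : ℕ} (hs : s ≠ 0) (h : ParentsConvexLE s) :
    ParentsConvexLE (2 * s) := by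
  refine ⟨fun ψ hψ => ?_, fun ψ hψ => ?_⟩ <;>
    simp only [expectP_double_add_one (2 * s) (by omega), expectP_double _ hs]
  · linarith [hψ.expectP_le s, h.1 _ (hψ.comp_sub_const 1)]
  · rw [expectP_double_add_one s hs]
    linarith [h.2 _ (hψ.comp_sub_const 1)]

lemma ParentsConvexLE.double_add_one {s : ℕ} (hs : s ≠ 0) (h : ParentsConvexLE s) :
    ParentsConvexLE (2 * s + 1) := by
  refine ⟨fun ψ hψ => ?_, fun ψ hψ => ?_⟩ <;>
    simp only [expectP_double_add_one (2 * s + 1) (by omega),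
      show 2 * s + 1 + 1 = 2 * (s + 1) by ring, expectP_double (s + 1) (by omega)]
  · rw [expectP_double_add_one s hs]
    linarith [h.1 _ (hψ.comp_add_const 1)]
  · linarith [hψ.expectP_le (s + 1), h.2 _ (hψ.comp_add_const 1)]

lemma parentsConvexLE (t : ℕ) (ht : t ≠ 0) : ParentsConvexLE t := by
  induction t using Nat.strong_induction_on with
  | _ t ih =>
    obtain ⟨s, rfl | rfl⟩ := Nat.even_or_odd' t
    · exact (ih s (by omega) (by omega)).double (by omega)
    · rcases Nat.eq_zero_or_pos s with rfl | hs
      · exact parentsConvexLE_one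
      · exact (ih s (by omega) hs.ne').double_add_one hs.ne'

lemma hword_concat (w : List LR) (W : LR) : hword (w ++ [W]) = LRstep (hword w) W :=
  List.foldl_concat ..

lemma exists_hword_eq (w : List LR) : ∃ s, s ≠ 0 ∧ hword w = 2 * s + 1 := by
  induction w using List.reverseRecOn with
  | nil => exact ⟨1, one_ne_zero, rfl⟩
  | append_singleton w W ih =>
    obtain ⟨s, hs, hw⟩ := ih
    rw [hword_concat, hw]
    cases W
    · exact ⟨2 * s, by omega, by simp only [LRstep]; omega⟩
    · exact ⟨2 * s + 1, by omega, rfl⟩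

/-- The peacock property: for every convex `ψ : ℤ → ℝ` (first differences nondecreasing),
appending a letter to a word increases the integral of `ψ` against `P_w`. -/
theorem peacock (w : List LR) (W : LR) (ψ : ℤ → ℝ)
    (hconvex : Monotone fun d : ℤ => ψ (d + 1) - ψ d) :
    (∑' d : ℤ, ψ d * P (hword w) d) ≤ ∑' d : ℤ, ψ d * P (hword (w ++ [W])) d := by
  obtain ⟨s, hs, hw⟩ := exists_hword_eq w
  rw [hword_concat, hw]
  cases W
  · rw [show LRstep (2 * s + 1) LR.L = 2 * (2 * s) + 1 by simp only [LRstep]; omega]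
    exact (parentsConvexLE (2 * s) (by omega)).2 ψ hconvex
  · exact (parentsConvexLE (2 * s + 1) (by omega)).1 ψ hconvex
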